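/- arXiv:2505.14121 — 3 statements merged into one kernel-verified Lean document; each statement's English description precedes it below -/
import Mathlib

section
/- The 3×3 matrix M₊ = (5κ²/72)·[[2(2−3γ), 22−15γ, 4(3γ−2)], [2(22−15γ), 9(γ−2), 4(3γ−2)], [2(3γ−2), 3γ−2, 6(4−3γ)]] satisfies: M₊(1,1,1)ᵀ is a negative multiple of (1,1,1)ᵀ, M₊(−4,−4,3)ᵀ is a negative multiple of (−4,−4,3)ᵀ, and M₊(−1,2,0)ᵀ is a positive multiple of (−1,2,0)ᵀ, for all γ > 2 and κ ≠ 0. In particular M₊ has exactly one positive eigenvalue. -/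
/-- The linearization M₊ of the normalized modified co-flow at ψ₊^κ has
eigenvectors (1,1,1), (−4,−4,3) with negative eigenvalues and (−1,2,0) with a
positive eigenvalue, for all γ > 2 and κ ≠ 0; moreover every eigenvalue of M₊ is
one of these three, so M₊ has exactly one positive eigenvalue. -/
theorem stmt_13 (κ γ : ℝ) (hκ : κ ≠ 0) (hγ : 2 < γ)
    (M : Matrix (Fin 3) (Fin 3) ℝ)
    (hM : M = (5 * κ ^ 2 / 72) •
      !![2 * (2 - 3 * γ), 22 - 15 * γ, 4 * (3 * γ - 2);
         2 * (22 - 15 * γ), 9 * (γ - 2), 4 * (3 * γ - 2);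
         2 * (3 * γ - 2), 3 * γ - 2, 6 * (4 - 3 * γ)]) :
    ∃ c₁ c₂ c₃ : ℝ, c₁ < 0 ∧ c₂ < 0 ∧ 0 < c₃ ∧
      M.mulVec ![1, 1, 1] = c₁ • ![1, 1, 1] ∧
      M.mulVec ![-4, -4, 3] = c₂ • ![-4, -4, 3] ∧
      M.mulVec ![-1, 2, 0] = c₃ • ![-1, 2, 0] ∧
      ∀ μ : ℝ, (∃ v : Fin 3 → ℝ, v ≠ 0 ∧ M.mulVec v = μ • v) →
        μ = c₁ ∨ μ = c₂ ∨ μ = c₃ := by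
  have hκ2 : 0 < κ ^ 2 := by positivity
  refine ⟨5 * κ ^ 2 / 72 * (9 * (2 - γ)), 5 * κ ^ 2 / 72 * (32 - 30 * γ),
    5 * κ ^ 2 / 72 * (24 * γ - 40), ?_, ?_, ?_, ?_, ?_, ?_, ?_⟩
  · have : 9 * (2 - γ) < 0 := by linarith
    have h : 0 < 5 * κ ^ 2 / 72 := by positivity
    nlinarith
  · have : 32 - 30 * γ < 0 := by linarith
    have h : 0 < 5 * κ ^ 2 / 72 := by positivity
    nlinarith
  · have : 0 < 24 * γ - 40 := by linarith
    have h : 0 < 5 * κ ^ 2 / 72 := by positivity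
    nlinarith
  · funext i
    fin_cases i <;>
      simp [hM, Matrix.mulVec, dotProduct, Fin.sum_univ_three] <;> ring
  · funext i
    fin_cases i <;>
      simp [hM, Matrix.mulVec, dotProduct, Fin.sum_univ_three] <;> ring
  · funext i
    fin_cases i <;>
      simp [hM, Matrix.mulVec, dotProduct, Fin.sum_univ_three] <;> ring
  · rintro μ ⟨v, hv0, hv⟩
    have h0 := congrFun hv 0
    have h1 := congrFun hv 1
    have h2 := congrFun hv 2
    simp [hM, Matrix.mulVec, dotProduct, Fin.sum_univ_three] at h0 h1 h2
    by_contra hc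
    push_neg at hc
    obtain ⟨hc1, hc2, hc3⟩ := hc
    have e1 : (5 * κ ^ 2 / 72 * (9 * (2 - γ)) - μ) *
        (2 * v 0 + v 1 + 4 * v 2) = 0 := by
      linear_combination 2 * h0 + h1 + 4 * h2
    have e2 : (5 * κ ^ 2 / 72 * (32 - 30 * γ) - μ) *
        (2 * v 0 + v 1 - 3 * v 2) = 0 := by
      linear_combination 2 * h0 + h1 - 3 * h2
    have e3 : (5 * κ ^ 2 / 72 * (24 * γ - 40) - μ) * (v 0 - v 1) = 0 := by
      linear_combination h0 - h1
    have s1 : 2 * v 0 + v 1 + 4 * v 2 = 0 := by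
      rcases mul_eq_zero.1 e1 with h | h
      · exact absurd (by linarith : μ = 5 * κ ^ 2 / 72 * (9 * (2 - γ))) hc1
      · exact h
    have s2 : 2 * v 0 + v 1 - 3 * v 2 = 0 := by
      rcases mul_eq_zero.1 e2 with h | h
      · exact absurd (by linarith : μ = 5 * κ ^ 2 / 72 * (32 - 30 * γ)) hc2
      · exact h
    have s3 : v 0 - v 1 = 0 := by
      rcases mul_eq_zero.1 e3 with h | h
      · exact absurd (by linarith : μ = 5 * κ ^ 2 / 72 * (24 * γ - 40)) hc3
      · exact h
    apply hv0
    funext i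
    fin_cases i <;> simp <;> linarith
end

section
/- The 3×3 matrix M₋ = (κ²/8)·[[10(2−3γ), 5γ−2, 4(5γ−2)], [2(5γ−2), 5(γ−2), 4(6−5γ)], [2(5γ−2), 6−5γ, 2(4−5γ)]] satisfies: M₋(1,1,1)ᵀ and M₋(−5,2,2)ᵀ are negative multiples of themselves, and M₋(0,−4,1)ᵀ is a positive multiple of (0,−4,1)ᵀ, for all γ > 2 and κ ≠ 0. Hence M₋ has exactly one positive eigenvalue. -/
/-- The linearization M₋ of the normalized modified co-flow at ψ₋^κ has
eigenvectors (1,1,1), (−5,2,2) with negative eigenvalues and (0,−4,1) with a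
positive eigenvalue, for all γ > 2 and κ ≠ 0; moreover every eigenvalue of M₋ is
one of these three, so M₋ has exactly one positive eigenvalue. -/
theorem stmt_14 (κ γ : ℝ) (hκ : κ ≠ 0) (hγ : 2 < γ)
    (M : Matrix (Fin 3) (Fin 3) ℝ)
    (hM : M = (κ ^ 2 / 8) •
      !![10 * (2 - 3 * γ), 5 * γ - 2, 4 * (5 * γ - 2);
         2 * (5 * γ - 2), 5 * (γ - 2), 4 * (6 - 5 * γ);
         2 * (5 * γ - 2), 6 - 5 * γ, 2 * (4 - 5 * γ)]) :
    ∃ c₁ c₂ c₃ : ℝ, c₁ < 0 ∧ c₂ < 0 ∧ 0 < c₃ ∧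
      M.mulVec ![1, 1, 1] = c₁ • ![1, 1, 1] ∧
      M.mulVec ![-5, 2, 2] = c₂ • ![-5, 2, 2] ∧
      M.mulVec ![0, -4, 1] = c₃ • ![0, -4, 1] ∧
      ∀ μ : ℝ, (∃ v : Fin 3 → ℝ, v ≠ 0 ∧ M.mulVec v = μ • v) →
        μ = c₁ ∨ μ = c₂ ∨ μ = c₃ := by
  have hκ2 : 0 < κ ^ 2 := by positivity
  refine ⟨κ ^ 2 / 8 * (10 - 5 * γ), κ ^ 2 / 8 * (24 - 40 * γ),
    κ ^ 2 / 8 * (10 * γ - 16), by nlinarith, by nlinarith, by nlinarith, ?_, ?_, ?_, ?_⟩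
  · subst hM
    funext i
    fin_cases i <;>
      simp [Matrix.mulVec, dotProduct, Fin.sum_univ_three] <;> ring
  · subst hM
    funext i
    fin_cases i <;>
      simp [Matrix.mulVec, dotProduct, Fin.sum_univ_three] <;> ring
  · subst hM
    funext i
    fin_cases i <;>
      simp [Matrix.mulVec, dotProduct, Fin.sum_univ_three] <;> ring
  · rintro μ ⟨v, hv, hMv⟩
    have h0 : (M - μ • (1 : Matrix (Fin 3) (Fin 3) ℝ)).mulVec v = 0 := by
      rw [Matrix.sub_mulVec, Matrix.smul_mulVec, Matrix.one_mulVec, hMv, sub_self]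
    have hdet : (M - μ • (1 : Matrix (Fin 3) (Fin 3) ℝ)).det = 0 := by
      rw [← Matrix.exists_mulVec_eq_zero_iff]
      exact ⟨v, hv, h0⟩
    have hA : M - μ • (1 : Matrix (Fin 3) (Fin 3) ℝ) =
        !![κ ^ 2 / 8 * (10 * (2 - 3 * γ)) - μ, κ ^ 2 / 8 * (5 * γ - 2), κ ^ 2 / 8 * (4 * (5 * γ - 2));
           κ ^ 2 / 8 * (2 * (5 * γ - 2)), κ ^ 2 / 8 * (5 * (γ - 2)) - μ, κ ^ 2 / 8 * (4 * (6 - 5 * γ));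
           κ ^ 2 / 8 * (2 * (5 * γ - 2)), κ ^ 2 / 8 * (6 - 5 * γ), κ ^ 2 / 8 * (2 * (4 - 5 * γ)) - μ] := by
      subst hM
      funext i j
      fin_cases i <;> fin_cases j <;>
        simp [Matrix.sub_apply, Matrix.smul_apply, Matrix.one_apply]
    rw [hA] at hdet
    simp [Matrix.det_fin_three, Matrix.vecHead, Matrix.vecTail] at hdet
    have hfact : (μ - κ ^ 2 / 8 * (10 - 5 * γ)) * (μ - κ ^ 2 / 8 * (24 - 40 * γ)) *
        (μ - κ ^ 2 / 8 * (10 * γ - 16)) = 0 := by linear_combination -hdet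
    rcases mul_eq_zero.mp hfact with h | h
    · rcases mul_eq_zero.mp h with h | h
      · exact Or.inl (by linarith [sub_eq_zero.mp h])
      · exact Or.inr (Or.inl (by linarith [sub_eq_zero.mp h]))
    · exact Or.inr (Or.inr (by linarith [sub_eq_zero.mp h]))
end

section
/- Suppose P: H → H is a bounded-below (self-adjoint-type) first-order system P(f, Z) = (−τ₀f + d*Z, −df + curl Z − (τ₀/2)Z) on a compact nearly G₂ manifold, and suppose (u, W) ∈ ker P*, i.e. −τ₀u − d*W = 0 and du + curl W − (τ₀/2)W = 0. If d* curl W = 0 and curl has no eigenvalue in the open interval (0, τ₀) (for τ₀ > 0), then u = 0 and W = 0; consequently P is surjective. Algebraic core: from d*(du + curl W − (τ₀/2)W) = 0 one derives Δu = −(τ₀²/2)u, forcing u = 0 since Δ ≥ 0 and τ₀ ≠ 0; then curl W = (τ₀/2)W forces W = 0 by the spectral gap. -/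
open RealInnerProductSpace

/-- Surjectivity of the operator P on a compact nearly G₂ manifold: if (u, W)
solves the adjoint kernel equations −τ₀u − d*W = 0 and du + curl W − (τ₀/2)W = 0,
where d* is adjoint to d, d* ∘ curl = 0, τ₀ > 0 and curl has no eigenvalue in
(0, τ₀), then u = 0 and W = 0. -/
theorem stmt_19 {H0 H1 : Type*}
    [NormedAddCommGroup H0] [InnerProductSpace ℝ H0]
    [NormedAddCommGroup H1] [InnerProductSpace ℝ H1]
    (d : H0 →ₗ[ℝ] H1) (dstar : H1 →ₗ[ℝ] H0) (curl : H1 →ₗ[ℝ] H1)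
    (τ₀ : ℝ) (hτ₀ : 0 < τ₀)
    (hadj : ∀ (f : H0) (w : H1), ⟪d f, w⟫ = ⟪f, dstar w⟫)
    (hdcurl : ∀ w : H1, dstar (curl w) = 0)
    (hgap : ∀ c ∈ Set.Ioo (0 : ℝ) τ₀, ∀ w : H1, curl w = c • w → w = 0)
    (u : H0) (W : H1)
    (h1 : -(τ₀ • u) - dstar W = 0)
    (h2 : d u + curl W - (τ₀ / 2) • W = 0) :
    u = 0 ∧ W = 0 := by
  have hdW : dstar W = -(τ₀ • u) := by
    have := h1; linear_combination (norm := abel) -this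
  have hdd : dstar (d u) = -((τ₀ * (τ₀ / 2)) • u) := by
    have h3 := congrArg dstar h2
    simp only [map_add, map_sub, map_smul, hdcurl, map_zero] at h3
    rw [hdW] at h3
    have : dstar (d u) + 0 - (τ₀ / 2) • -(τ₀ • u) = 0 := h3
    rw [smul_neg, smul_smul] at this
    linear_combination (norm := module) this
  have hu : u = 0 := by
    have key : ⟪d u, d u⟫ = -((τ₀ * (τ₀ / 2)) * ⟪u, u⟫) := by
      rw [hadj, hdd, inner_neg_right, real_inner_smul_right]
    have h1' : (0:ℝ) ≤ ⟪d u, d u⟫ := real_inner_self_nonneg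
    have h2' : (0:ℝ) ≤ ⟪u, u⟫ := real_inner_self_nonneg
    have hpos : 0 < τ₀ * (τ₀ / 2) := by positivity
    have : ⟪u, u⟫ = (0:ℝ) := by nlinarith
    exact inner_self_eq_zero.mp this
  have hcurl : curl W = (τ₀ / 2) • W := by
    have h2' := h2
    rw [hu, map_zero, zero_add] at h2'
    linear_combination (norm := module) h2'
  have hW : W = 0 := hgap (τ₀ / 2) ⟨by positivity, by linarith⟩ W hcurl
  exact ⟨hu, hW⟩
end
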